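/- Assume the Setup. If W is a right A-module with finite C₂-injective dimension, then the right T-module (W, 0), with zero component in the B-slot and zero structure map, has finite 𝔗_{C₂,F₂}-injective dimension. -/

import Mathlib

/-! Preamble part 1: bundled modules, character modules, duality pairs. -/

open MulOpposite Function

universe u

namespace DualityPairs

/-- A bundled left `R`-module (in universe `u`). -/
structure Mdl (R : Type u) [Ring R] : Type (u + 1) where
  carrier : Type u
  [isAddCommGroup : AddCommGroup carrier]
  [isModule : Module R carrier]

attribute [instance] Mdl.isAddCommGroup Mdl.isModule

instance {R : Type u} [Ring R] : CoeSort (Mdl R) (Type u) := ⟨Mdl.carrier⟩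

/-- Bundle a module. -/
def Mdl.of (R : Type u) [Ring R] (N : Type u) [AddCommGroup N] [Module R N] : Mdl R := ⟨N⟩

/-- The character group `N⁺ = Hom_ℤ(N, ℚ/ℤ)` of an abelian group. -/
def Char (N : Type u) [AddCommGroup N] : Type u := N →+ AddCircle (1 : ℚ)

instance {N : Type u} [AddCommGroup N] : AddCommGroup (Char N) :=
  inferInstanceAs (AddCommGroup (N →+ AddCircle (1 : ℚ)))


instance {N : Type u} [AddCommGroup N] : FunLike (Char N) N (AddCircle (1 : ℚ)) where
  coe c := c.toFun
  coe_injective f g h := DFunLike.coe_injective (F := N →+ AddCircle (1 : ℚ)) h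

instance {N : Type u} [AddCommGroup N] : AddMonoidHomClass (Char N) N (AddCircle (1 : ℚ)) where
  map_add c := c.map_add
  map_zero c := c.map_zero

/-- The right `R`-module structure on the character module of a left `R`-module:
`(f • r) (n) = f (r • n)`. -/
instance Char.moduleRight {R : Type u} [Ring R] {N : Type u} [AddCommGroup N] [Module R N] :
    Module Rᵐᵒᵖ (Char N) where
  smul r f := AddMonoidHom.comp (f : N →+ AddCircle (1 : ℚ))
    (DistribMulAction.toAddMonoidHom N r.unop)
  one_smul f := DFunLike.ext _ _ fun n => by
    show f ((1 : Rᵐᵒᵖ).unop • n) = f n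
    rw [unop_one, one_smul]
  mul_smul r s f := DFunLike.ext _ _ fun n => by
    show f ((r * s).unop • n) = f (s.unop • r.unop • n)
    rw [unop_mul, mul_smul]
  smul_zero r := DFunLike.ext _ _ fun n => rfl
  smul_add r f g := DFunLike.ext _ _ fun n => rfl
  add_smul r s f := DFunLike.ext _ _ fun n => by
    show f ((r + s).unop • n) = f (r.unop • n) + f (s.unop • n)
    rw [unop_add, add_smul, map_add]
  zero_smul f := DFunLike.ext _ _ fun n => by
    show f ((0 : Rᵐᵒᵖ).unop • n) = (0 : Char N) n
    rw [unop_zero, zero_smul, map_zero]; rfl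

/-- The left `R`-module structure on the character module of a right `R`-module. -/
instance Char.moduleLeft {R : Type u} [Ring R] {N : Type u} [AddCommGroup N] [Module Rᵐᵒᵖ N] :
    Module R (Char N) where
  smul r f := AddMonoidHom.comp (f : N →+ AddCircle (1 : ℚ))
    (DistribMulAction.toAddMonoidHom N (op r))
  one_smul f := DFunLike.ext _ _ fun n => by
    show f (op (1 : R) • n) = f n
    rw [op_one, one_smul]
  mul_smul r s f := DFunLike.ext _ _ fun n => by
    show f (op (r * s) • n) = f (op s • op r • n)
    rw [op_mul, mul_smul]
  smul_zero r := DFunLike.ext _ _ fun n => rfl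
  smul_add r f g := DFunLike.ext _ _ fun n => rfl
  add_smul r s f := DFunLike.ext _ _ fun n => by
    show f (op (r + s) • n) = f (op r • n) + f (op s • n)
    rw [op_add, add_smul, map_add]
  zero_smul f := DFunLike.ext _ _ fun n => by
    show f (op (0 : R) • n) = (0 : Char N) n
    rw [op_zero, zero_smul, map_zero]; rfl

variable (R : Type u) [Ring R]

/-- A duality pair `(𝓛, 𝓐)` over `R`: a class `𝓛` of left `R`-modules and a class `𝓐` of right
`R`-modules such that `L ∈ 𝓛 ↔ L⁺ ∈ 𝓐`, and `𝓐` is closed under direct summands and finite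
direct sums. -/
structure IsDualityPair (𝓛 : Mdl.{u} R → Prop) (𝓐 : Mdl.{u} Rᵐᵒᵖ → Prop) : Prop where
  char_mem_iff : ∀ N : Mdl.{u} R, 𝓛 N ↔ 𝓐 (Mdl.of Rᵐᵒᵖ (Char N))
  summand : ∀ N N' : Mdl.{u} Rᵐᵒᵖ, 𝓐 N' →
    (∃ (i : N →ₗ[Rᵐᵒᵖ] N') (p : N' →ₗ[Rᵐᵒᵖ] N), p.comp i = LinearMap.id) → 𝓐 N
  sum : ∀ N N' : Mdl.{u} Rᵐᵒᵖ, 𝓐 N → 𝓐 N' → 𝓐 (Mdl.of Rᵐᵒᵖ (N × N'))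

/-- A symmetric duality pair: both `(𝓛, 𝓐)` and `(𝓐, 𝓛)` are duality pairs. -/
structure IsSymmetricDualityPair (𝓛 : Mdl.{u} R → Prop) (𝓐 : Mdl.{u} Rᵐᵒᵖ → Prop)
    extends IsDualityPair R 𝓛 𝓐 : Prop where
  char_mem_iff' : ∀ N : Mdl.{u} Rᵐᵒᵖ, 𝓐 N ↔ 𝓛 (Mdl.of R (Char N))
  summand' : ∀ N N' : Mdl.{u} R, 𝓛 N' →
    (∃ (i : N →ₗ[R] N') (p : N' →ₗ[R] N), p.comp i = LinearMap.id) → 𝓛 N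
  sum' : ∀ N N' : Mdl.{u} R, 𝓛 N → 𝓛 N' → 𝓛 (Mdl.of R (N × N'))

/-- A semi-complete duality pair: a symmetric duality pair which is moreover semi-perfect,
i.e. `R ∈ 𝓛` and `𝓛` is closed under arbitrary direct sums. -/
structure IsSemiCompleteDualityPair (𝓛 : Mdl.{u} R → Prop) (𝓐 : Mdl.{u} Rᵐᵒᵖ → Prop)
    extends IsSymmetricDualityPair R 𝓛 𝓐 : Prop where
  self_mem : 𝓛 (Mdl.of R R)
  dsum : ∀ (ι : Type u) (f : ι → Mdl.{u} R), (∀ i, 𝓛 (f i)) →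
    𝓛 (Mdl.of R (DirectSum ι fun i => (f i : Type u)))

end DualityPairs

namespace DualityPairs

open TensorProduct

noncomputable section

/-- An (unbounded, cochain-indexed) complex of left `R`-modules. -/
structure Cx (R : Type u) [Ring R] : Type (u + 1) where
  X : ℤ → Type u
  [isAddCommGroup : ∀ n, AddCommGroup (X n)]
  [isModule : ∀ n, Module R (X n)]
  d : ∀ n, X n →ₗ[R] X (n + 1)
  dd : ∀ n, (d (n + 1)).comp (d n) = 0

attribute [instance] Cx.isAddCommGroup Cx.isModule

/-- A complex is exact if at every spot the kernel equals the image. -/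
def Cx.Exact {R : Type u} [Ring R] (P : Cx R) : Prop :=
  ∀ (n : ℤ) (x : P.X (n + 1)), P.d (n + 1) x = 0 → ∃ y : P.X n, P.d n y = x

section CTensor

variable (R : Type u) [Ring R]
variable (G : Type u) [AddCommGroup G] [Module Rᵐᵒᵖ G]
variable (N N' : Type u) [AddCommGroup N] [Module R N] [AddCommGroup N'] [Module R N']

/-- The subgroup of `G ⊗_ℤ N` generated by the tensor relations over `R`. -/
def crel : Submodule ℤ (G ⊗[ℤ] N) :=
  Submodule.span ℤ
    {z | ∃ (g : G) (r : R) (n : N), z = (op r • g) ⊗ₜ[ℤ] n - g ⊗ₜ[ℤ] (r • n)}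

/-- The balanced tensor product `G ⊗_R N` of a right `R`-module `G` and a left `R`-module `N`,
as an abelian group. -/
def CTensor : Type u := (G ⊗[ℤ] N) ⧸ crel R G N

instance : AddCommGroup (CTensor R G N) :=
  inferInstanceAs (AddCommGroup ((G ⊗[ℤ] N) ⧸ crel R G N))

instance : Module ℤ (CTensor R G N) :=
  inferInstanceAs (Module ℤ ((G ⊗[ℤ] N) ⧸ crel R G N))

variable {R G N N'}

/-- The class of the elementary tensor `g ⊗ n` in `G ⊗_R N`. -/
def CTensor.tmul (g : G) (n : N) : CTensor R G N :=
  Submodule.Quotient.mk (g ⊗ₜ[ℤ] n)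

variable (R G) in
/-- The map `G ⊗_R N → G ⊗_R N'` induced by an `R`-linear map `N → N'`. -/
def CTensor.mapRight (f : N →ₗ[R] N') : CTensor R G N →ₗ[ℤ] CTensor R G N' :=
  Submodule.mapQ _ _ (LinearMap.lTensor G f.toAddMonoidHom.toIntLinearMap) <| by
    rw [crel, Submodule.span_le]
    rintro z ⟨g, r, n, rfl⟩
    simp only [SetLike.mem_coe, Submodule.mem_comap, map_sub, LinearMap.lTensor_tmul]
    refine Submodule.subset_span ⟨g, r, f n, ?_⟩
    erw [map_sub, LinearMap.lTensor_tmul, LinearMap.lTensor_tmul]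
    simp [map_smul]

variable (R N) in
/-- The map `G ⊗_R N → G' ⊗_R N` induced by a map `G → G'` of right `R`-modules. -/
def CTensor.mapLeft {G' : Type u} [AddCommGroup G'] [Module Rᵐᵒᵖ G'] (f : G →ₗ[Rᵐᵒᵖ] G') :
    CTensor R G N →ₗ[ℤ] CTensor R G' N :=
  Submodule.mapQ _ _ (LinearMap.rTensor N f.toAddMonoidHom.toIntLinearMap) <| by
    rw [crel, Submodule.span_le]
    rintro z ⟨g, r, n, rfl⟩
    simp only [SetLike.mem_coe, Submodule.mem_comap, map_sub, LinearMap.rTensor_tmul]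
    refine Submodule.subset_span ⟨f g, r, n, ?_⟩
    erw [map_sub, LinearMap.rTensor_tmul, LinearMap.rTensor_tmul]
    simp [map_smul]

@[simp] lemma CTensor.mapRight_tmul (f : N →ₗ[R] N') (g : G) (n : N) :
    CTensor.mapRight R G f (CTensor.tmul g n) = CTensor.tmul g (f n) := rfl

end CTensor

section GorensteinDefs

variable (R : Type u) [Ring R]

/-- The complex `G ⊗_R P` (for `P` a complex of left `R`-modules and `G` a right `R`-module)
is exact. -/
def TensorExact (G : Type u) [AddCommGroup G] [Module Rᵐᵒᵖ G] (P : Cx R) : Prop :=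
  ∀ (n : ℤ) (x : CTensor R G (P.X (n + 1))),
    CTensor.mapRight R G (P.d (n + 1)) x = 0 →
      ∃ y : CTensor R G (P.X n), CTensor.mapRight R G (P.d n) y = x

/-- The complex `Hom_R(P, L)` is exact, for `P` a complex of left `R`-modules and `L` a left
`R`-module. -/
def HomIntoExact (P : Cx R) (L : Type u) [AddCommGroup L] [Module R L] : Prop :=
  ∀ (n : ℤ) (f : P.X (n + 1) →ₗ[R] L), f.comp (P.d n) = 0 →
    ∃ g : P.X (n + 1 + 1) →ₗ[R] L, g.comp (P.d (n + 1)) = f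

/-- The complex `Hom_R(G, I)` is exact, for `I` a complex of `R`-modules and `G` an `R`-module. -/
def HomFromExact (G : Type u) [AddCommGroup G] [Module R G] (I : Cx R) : Prop :=
  ∀ (n : ℤ) (f : G →ₗ[R] I.X (n + 1)), (I.d (n + 1)).comp f = 0 →
    ∃ g : G →ₗ[R] I.X n, (I.d n).comp g = f

/-- A left `R`-module `F` is flat if tensoring with it preserves injectivity of maps of
right `R`-modules. -/
def IsFlatMod (F : Type u) [AddCommGroup F] [Module R F] : Prop :=
  ∀ (G G' : Mdl.{u} Rᵐᵒᵖ) (f : G →ₗ[Rᵐᵒᵖ] G'), Injective f →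
    Injective (CTensor.mapLeft R F f)

end GorensteinDefs

end

end DualityPairs

namespace DualityPairs

noncomputable section

open TensorProduct

variable (R : Type u) [Ring R]

/-- `N` is Gorenstein `(𝓛, 𝓐)`-projective: `N` is a cycle of an exact complex of projective
left `R`-modules which stays exact when tensored with any member of `𝓐`. -/
def IsGorensteinProjective (𝓐 : Mdl.{u} Rᵐᵒᵖ → Prop)
    (N : Type u) [AddCommGroup N] [Module R N] : Prop :=
  ∃ P : Cx R, (∀ n, Module.Projective R (P.X n)) ∧ P.Exact ∧
    (∀ G : Mdl.{u} Rᵐᵒᵖ, 𝓐 G → TensorExact R G P) ∧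
    Nonempty (N ≃ₗ[R] LinearMap.ker (P.d 0))

/-- `N` is `(𝓛, 𝓐)`-Gorenstein projective: `N` is a cycle of an exact complex of projective
left `R`-modules which stays exact under `Hom_R(-, L)` for every `L ∈ 𝓛`. -/
def IsDGorensteinProjective (𝓛 : Mdl.{u} R → Prop)
    (N : Type u) [AddCommGroup N] [Module R N] : Prop :=
  ∃ P : Cx R, (∀ n, Module.Projective R (P.X n)) ∧ P.Exact ∧
    (∀ L : Mdl.{u} R, 𝓛 L → HomIntoExact R P L) ∧
    Nonempty (N ≃ₗ[R] LinearMap.ker (P.d 0))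

/-- `N` is Gorenstein `(𝓛, 𝓐)`-injective: `N` is a cycle of an exact complex of injective
`R`-modules which stays exact under `Hom_R(G, -)` for every `G ∈ 𝓐`.  (Apply this to the
ring `Rᵐᵒᵖ` to speak about right `R`-modules.) -/
def IsGorensteinInjective (𝓐 : Mdl.{u} R → Prop)
    (N : Type u) [AddCommGroup N] [Module R N] : Prop :=
  ∃ I : Cx R, (∀ n, Module.Injective R (I.X n)) ∧ I.Exact ∧
    (∀ G : Mdl.{u} R, 𝓐 G → HomFromExact R G I) ∧
    Nonempty (N ≃ₗ[R] LinearMap.ker (I.d 0))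

/-- `N` is Gorenstein `(𝓛, 𝓐)`-flat: `N` is a cycle of an exact complex of flat
left `R`-modules which stays exact when tensored with any member of `𝓐`. -/
def IsGorensteinFlat (𝓐 : Mdl.{u} Rᵐᵒᵖ → Prop)
    (N : Type u) [AddCommGroup N] [Module R N] : Prop :=
  ∃ F : Cx R, (∀ n, IsFlatMod R (F.X n)) ∧ F.Exact ∧
    (∀ G : Mdl.{u} Rᵐᵒᵖ, 𝓐 G → TensorExact R G F) ∧
    Nonempty (N ≃ₗ[R] LinearMap.ker (F.d 0))

/-- `N` has a finite coresolution `0 → N → X⁰ → X¹ → ⋯ → Xⁿ → 0` with all `Xⁱ` in the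
class `𝓧`; i.e. `N` has finite `𝓧`-injective dimension. -/
def FiniteXInjDim (𝓧 : Mdl.{u} R → Prop) (N : Type u) [AddCommGroup N] [Module R N] : Prop :=
  ∃ (n : ℕ) (C : Cx R),
    (∀ i : ℤ, i < 0 ∨ (n : ℤ) < i → Subsingleton (C.X i)) ∧
    (∀ i : ℤ, 0 ≤ i → i ≤ (n : ℤ) → 𝓧 (Mdl.of R (C.X i))) ∧
    (∀ (i : ℤ), 0 ≤ i → ∀ x : C.X (i + 1), C.d (i + 1) x = 0 → ∃ y : C.X i, C.d i y = x) ∧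
    Nonempty (N ≃ₗ[R] LinearMap.ker (C.d 0))

/-- `N` has a finite resolution `0 → Xₙ → ⋯ → X₁ → X₀ → N → 0` with all `Xᵢ` in the class `𝓧`;
i.e. `N` has finite `𝓧`-projective (e.g. flat) dimension.  (The complex is indexed so that
`C.X 0 = Xₙ, …, C.X n = X₀`.) -/
def FiniteXProjDim (𝓧 : Mdl.{u} R → Prop) (N : Type u) [AddCommGroup N] [Module R N] : Prop :=
  ∃ (n : ℕ) (C : Cx R),
    (∀ i : ℤ, i < 0 ∨ (n : ℤ) < i → Subsingleton (C.X i)) ∧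
    (∀ i : ℤ, 0 ≤ i → i ≤ (n : ℤ) → 𝓧 (Mdl.of R (C.X i))) ∧
    (∀ (i : ℤ), -1 ≤ i → i + 1 < (n : ℤ) →
      ∀ x : C.X (i + 1), C.d (i + 1) x = 0 → ∃ y : C.X i, C.d i y = x) ∧
    Nonempty (N ≃ₗ[R] (C.X ((n : ℤ) - 1 + 1) ⧸ LinearMap.range (C.d ((n : ℤ) - 1))))

/-- `M` has finite flat dimension. -/
def FiniteFlatDim (M : Type u) [AddCommGroup M] [Module R M] : Prop :=
  FiniteXProjDim R (fun F => IsFlatMod R F.carrier) M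

/-- `M` has finite injective dimension. -/
def FiniteInjDim (M : Type u) [AddCommGroup M] [Module R M] : Prop :=
  FiniteXInjDim R (fun E => Module.Injective R E.carrier) M

end

end DualityPairs

namespace DualityPairs

noncomputable section

open TensorProduct

set_option linter.unusedSectionVars false

/-- The underlying set of the upper triangular matrix ring `T = (A M; 0 B)` attached to two
rings `A`, `B` and an `(A,B)`-bimodule `M`. -/
@[ext] structure Triang (A M B : Type u) where
  a : A
  m : M
  b : B

namespace Triang

variable {A M B : Type u}

section add

variable [AddCommGroup A] [AddCommGroup M] [AddCommGroup B]

instance : Add (Triang A M B) := ⟨fun x y => ⟨x.a + y.a, x.m + y.m, x.b + y.b⟩⟩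
instance : Zero (Triang A M B) := ⟨⟨0, 0, 0⟩⟩
instance : Neg (Triang A M B) := ⟨fun x => ⟨-x.a, -x.m, -x.b⟩⟩
instance : Sub (Triang A M B) := ⟨fun x y => ⟨x.a - y.a, x.m - y.m, x.b - y.b⟩⟩

@[simp] lemma add_a (x y : Triang A M B) : (x + y).a = x.a + y.a := rfl
@[simp] lemma add_m (x y : Triang A M B) : (x + y).m = x.m + y.m := rfl
@[simp] lemma add_b (x y : Triang A M B) : (x + y).b = x.b + y.b := rfl
@[simp] lemma zero_a : (0 : Triang A M B).a = 0 := rfl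
@[simp] lemma zero_m : (0 : Triang A M B).m = 0 := rfl
@[simp] lemma zero_b : (0 : Triang A M B).b = 0 := rfl
@[simp] lemma neg_a (x : Triang A M B) : (-x).a = -x.a := rfl
@[simp] lemma neg_m (x : Triang A M B) : (-x).m = -x.m := rfl
@[simp] lemma neg_b (x : Triang A M B) : (-x).b = -x.b := rfl

instance addCommGroup : AddCommGroup (Triang A M B) where
  add_assoc x y z := by ext <;> simp [add_assoc]
  zero_add x := by ext <;> simp
  add_zero x := by ext <;> simp
  add_comm x y := by ext <;> simp [add_comm]
  neg_add_cancel x := by ext <;> simp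
  sub_eq_add_neg x y := by
    ext <;> exact sub_eq_add_neg _ _
  nsmul := nsmulRec
  zsmul := zsmulRec

end add

section ring

variable [Ring A] [Ring B] [AddCommGroup M] [Module A M] [Module Bᵐᵒᵖ M]
variable [SMulCommClass A Bᵐᵒᵖ M]

instance : One (Triang A M B) := ⟨⟨1, 0, 1⟩⟩
instance : Mul (Triang A M B) :=
  ⟨fun x y => ⟨x.a * y.a, x.a • y.m + op y.b • x.m, x.b * y.b⟩⟩

@[simp] lemma one_a : (1 : Triang A M B).a = 1 := rfl
@[simp] lemma one_m : (1 : Triang A M B).m = 0 := rfl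
@[simp] lemma one_b : (1 : Triang A M B).b = 1 := rfl
@[simp] lemma mul_a (x y : Triang A M B) : (x * y).a = x.a * y.a := rfl
@[simp] lemma mul_m (x y : Triang A M B) : (x * y).m = x.a • y.m + op y.b • x.m := rfl
@[simp] lemma mul_b (x y : Triang A M B) : (x * y).b = x.b * y.b := rfl

/-- The upper triangular matrix ring `T = (A M; 0 B)`. -/
instance ring : Ring (Triang A M B) where
  __ := Triang.addCommGroup
  mul_assoc x y z := by
    ext
    · simp [mul_assoc]
    · simp only [mul_m, mul_a, mul_b, smul_add, add_smul, mul_smul, op_mul, smul_comm]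
      abel
    · simp [mul_assoc]
  one_mul x := by ext <;> simp
  mul_one x := by ext <;> simp
  left_distrib x y z := by
    ext
    · simp [mul_add]
    · simp only [mul_m, add_m, add_a, add_b, smul_add, add_smul, op_add]
      abel
    · simp [mul_add]
  right_distrib x y z := by
    ext
    · simp [add_mul]
    · simp only [mul_m, add_m, add_a, add_b, smul_add, add_smul, op_add]
      abel
    · simp [add_mul]
  zero_mul x := by ext <;> simp
  mul_zero x := by ext <;> simp

end ring

end Triang

end

end DualityPairs

namespace DualityPairs

noncomputable section

open TensorProduct

variable (A B : Type u) [Ring A] [Ring B]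
variable (M : Type u) [AddCommGroup M] [Module A M] [Module Bᵐᵒᵖ M] [SMulCommClass A Bᵐᵒᵖ M]

section MTensor

variable (X : Type u) [AddCommGroup X] [Module B X]
set_option linter.unusedSectionVars false

/-- The `A`-submodule of relations defining `M ⊗_B X`. -/
def mrel : Submodule A (M ⊗[ℤ] X) :=
  Submodule.span A
    {z | ∃ (m : M) (b : B) (x : X), z = (op b • m) ⊗ₜ[ℤ] x - m ⊗ₜ[ℤ] (b • x)}

/-- The balanced tensor product `M ⊗_B X` of the `(A,B)`-bimodule `M` and a left `B`-module
`X`; it is a left `A`-module. -/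
def MTensor : Type u := (M ⊗[ℤ] X) ⧸ mrel A B M X

instance : AddCommGroup (MTensor A B M X) :=
  inferInstanceAs (AddCommGroup ((M ⊗[ℤ] X) ⧸ mrel A B M X))

instance : Module A (MTensor A B M X) :=
  inferInstanceAs (Module A ((M ⊗[ℤ] X) ⧸ mrel A B M X))

variable {A B M X}

/-- The class of the elementary tensor `m ⊗ x` in `M ⊗_B X`. -/
def MTensor.tmul (m : M) (x : X) : MTensor A B M X :=
  Submodule.Quotient.mk (m ⊗ₜ[ℤ] x)

@[simp] lemma MTensor.tmul_add (m : M) (x y : X) :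
    (MTensor.tmul m (x + y) : MTensor A B M X) = MTensor.tmul m x + MTensor.tmul m y := by
  rw [MTensor.tmul, TensorProduct.tmul_add, Submodule.Quotient.mk_add]; rfl

@[simp] lemma MTensor.add_tmul (m m' : M) (x : X) :
    (MTensor.tmul (m + m') x : MTensor A B M X) = MTensor.tmul m x + MTensor.tmul m' x := by
  rw [MTensor.tmul, TensorProduct.add_tmul, Submodule.Quotient.mk_add]; rfl

@[simp] lemma MTensor.smul_tmul (a : A) (m : M) (x : X) :
    (MTensor.tmul (a • m) x : MTensor A B M X) = a • MTensor.tmul m x := by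
  rw [MTensor.tmul, ← TensorProduct.smul_tmul', Submodule.Quotient.mk_smul]; rfl

@[simp] lemma MTensor.zero_tmul (x : X) :
    (MTensor.tmul (0 : M) x : MTensor A B M X) = 0 := by
  rw [MTensor.tmul, TensorProduct.zero_tmul]; exact Submodule.Quotient.mk_zero _

@[simp] lemma MTensor.tmul_zero (m : M) :
    (MTensor.tmul m (0 : X) : MTensor A B M X) = 0 := by
  rw [MTensor.tmul, TensorProduct.tmul_zero]; exact Submodule.Quotient.mk_zero _

/-- The balance relation `(m · b) ⊗ x = m ⊗ (b · x)` in `M ⊗_B X`. -/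
lemma MTensor.balance (m : M) (b : B) (x : X) :
    (MTensor.tmul (op b • m) x : MTensor A B M X) = MTensor.tmul m (b • x) := by
  rw [MTensor.tmul, MTensor.tmul]
  show (Submodule.Quotient.mk _ : (M ⊗[ℤ] X) ⧸ mrel A B M X) = Submodule.Quotient.mk _
  rw [Submodule.Quotient.eq]
  exact Submodule.subset_span ⟨m, b, x, rfl⟩

end MTensor

end

end DualityPairs

namespace DualityPairs

noncomputable section

open TensorProduct

variable (A B : Type u) [Ring A] [Ring B]
variable (M : Type u) [AddCommGroup M] [Module A M] [Module Bᵐᵒᵖ M] [SMulCommClass A Bᵐᵒᵖ M]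

section LeftTriple

variable {X₁ X₂ : Type u} [AddCommGroup X₁] [Module A X₁] [AddCommGroup X₂] [Module B X₂]

variable {A B M}

/-- The left `T`-module structure on `X₁ × X₂` determined by a triple
`(X₁, X₂, φ : M ⊗_B X₂ → X₁)`. -/
def leftTripleModule (φ : MTensor A B M X₂ →ₗ[A] X₁) :
    Module (Triang A M B) (X₁ × X₂) where
  smul t x := (t.a • x.1 + φ (MTensor.tmul t.m x.2), t.b • x.2)
  one_smul x := by
    show ((1 : Triang A M B).a • x.1 + φ (MTensor.tmul (1 : Triang A M B).m x.2),
      (1 : Triang A M B).b • x.2) = x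
    simp
  mul_smul s t x := by
    show ((s * t).a • x.1 + φ (MTensor.tmul (s * t).m x.2), (s * t).b • x.2)
      = (s.a • (t.a • x.1 + φ (MTensor.tmul t.m x.2)) +
          φ (MTensor.tmul s.m (t.b • x.2)), s.b • t.b • x.2)
    have h : φ (MTensor.tmul (op t.b • s.m) x.2) = φ (MTensor.tmul s.m (t.b • x.2)) := by
      rw [MTensor.balance]
    ext
    · show (s.a * t.a) • x.1 + φ (MTensor.tmul (s.a • t.m + op t.b • s.m) x.2) = _
      simp only [MTensor.add_tmul, MTensor.smul_tmul, map_add, map_smul, mul_smul, smul_add, h]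
      abel
    · exact mul_smul s.b t.b x.2
  smul_zero t := by
    show (t.a • (0 : X₁) + φ (MTensor.tmul t.m (0 : X₂)), t.b • (0 : X₂)) = 0
    simp
  smul_add t x y := by
    show (t.a • (x.1 + y.1) + φ (MTensor.tmul t.m (x.2 + y.2)), t.b • (x.2 + y.2)) = _
    ext
    · show _ = (t.a • x.1 + φ (MTensor.tmul t.m x.2)) + (t.a • y.1 + φ (MTensor.tmul t.m y.2))
      simp only [MTensor.tmul_add, map_add, smul_add]
      abel
    · exact smul_add t.b x.2 y.2
  add_smul s t x := by
    show ((s + t).a • x.1 + φ (MTensor.tmul (s + t).m x.2), (s + t).b • x.2) = _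
    ext
    · show (s.a + t.a) • x.1 + φ (MTensor.tmul (s.m + t.m) x.2)
        = (s.a • x.1 + φ (MTensor.tmul s.m x.2)) + (t.a • x.1 + φ (MTensor.tmul t.m x.2))
      simp only [MTensor.add_tmul, map_add, add_smul]
      abel
    · exact add_smul s.b t.b x.2
  zero_smul x := by
    show ((0 : Triang A M B).a • x.1 + φ (MTensor.tmul (0 : Triang A M B).m x.2),
      (0 : Triang A M B).b • x.2) = 0
    simp

/-- The left `T`-module attached to a triple `(X₁, X₂, φ)`, as a bundled module. -/
def leftTriple (φ : MTensor A B M X₂ →ₗ[A] X₁) : Mdl (Triang A M B) :=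
  @Mdl.mk (Triang A M B) _ (X₁ × X₂) _ (leftTripleModule φ)

end LeftTriple

end

end DualityPairs

namespace DualityPairs

noncomputable section

open TensorProduct

variable (A B : Type u) [Ring A] [Ring B]
variable (M : Type u) [AddCommGroup M] [Module A M] [Module Bᵐᵒᵖ M] [SMulCommClass A Bᵐᵒᵖ M]

section HomModule

variable (D : Type u) [AddCommGroup D] [Module Bᵐᵒᵖ D]

/-- For a right `B`-module `D`, the group `Hom_B(M, D)` of `B`-linear maps is a right
`A`-module via `(f · a) (m) = f (a • m)`. -/
instance homModule : Module Aᵐᵒᵖ (M →ₗ[Bᵐᵒᵖ] D) where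
  smul a f :=
    { toFun := fun m => f (a.unop • m)
      map_add' := fun m m' => by
        show f (a.unop • (m + m')) = f (a.unop • m) + f (a.unop • m')
        rw [smul_add, map_add]
      map_smul' := fun b m => by
        simp only [RingHom.id_apply]
        rw [smul_comm, map_smul] }
  one_smul f := LinearMap.ext fun m => by
    show f ((1 : Aᵐᵒᵖ).unop • m) = f m
    rw [unop_one, one_smul]
  mul_smul a a' f := LinearMap.ext fun m => by
    show f ((a * a').unop • m) = f (a'.unop • a.unop • m)
    rw [unop_mul, mul_smul]
  smul_zero a := LinearMap.ext fun m => rfl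
  smul_add a f g := LinearMap.ext fun m => rfl
  add_smul a a' f := LinearMap.ext fun m => by
    show f ((a + a').unop • m) = f (a.unop • m) + f (a'.unop • m)
    rw [unop_add, add_smul, map_add]
  zero_smul f := LinearMap.ext fun m => by
    show f ((0 : Aᵐᵒᵖ).unop • m) = 0
    rw [unop_zero, zero_smul, map_zero]

@[simp] lemma homModule_smul_apply (a : Aᵐᵒᵖ) (f : M →ₗ[Bᵐᵒᵖ] D) (m : M) :
    (a • f) m = f (a.unop • m) := rfl

end HomModule

section RightTriple

variable {W₁ W₂ : Type u} [AddCommGroup W₁] [Module Aᵐᵒᵖ W₁] [AddCommGroup W₂] [Module Bᵐᵒᵖ W₂]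

variable {A B M}

/-- The right `T`-module structure on `W₁ × W₂` determined by a triple `(W₁, W₂, φ)` of a right
`A`-module `W₁`, a right `B`-module `W₂` and a balanced map `φ : W₁ ⊗_A M → W₂`, here encoded
by its adjoint `ρ = φ̃ : W₁ → Hom_B(M, W₂)`, `ρ w m = φ (w ⊗ m)`. -/
def rightTripleModule (ρ : W₁ →+ (M →ₗ[Bᵐᵒᵖ] W₂))
    (hρ : ∀ (a : A) (w : W₁) (m : M), ρ (op a • w) m = ρ w (a • m)) :
    Module (Triang A M B)ᵐᵒᵖ (W₁ × W₂) where
  smul t w := (op t.unop.a • w.1, ρ w.1 t.unop.m + op t.unop.b • w.2)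
  one_smul w := by
    show (op (1 : Triang A M B).a • w.1, ρ w.1 (1 : Triang A M B).m
      + op (1 : Triang A M B).b • w.2) = w
    simp
  mul_smul x y w := by
    show (op ((y.unop * x.unop).a) • w.1,
        ρ w.1 ((y.unop * x.unop).m) + op ((y.unop * x.unop).b) • w.2)
      = (op x.unop.a • (op y.unop.a • w.1),
        ρ (op y.unop.a • w.1) x.unop.m + op x.unop.b • (ρ w.1 y.unop.m + op y.unop.b • w.2))
    ext
    · show op (y.unop.a * x.unop.a) • w.1 = _
      rw [op_mul, mul_smul]
    · show ρ w.1 (y.unop.a • x.unop.m + op x.unop.b • y.unop.m)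
          + op (y.unop.b * x.unop.b) • w.2 = _
      rw [map_add, op_mul, mul_smul, hρ, LinearMap.map_smul, smul_add]
      abel
  smul_zero t := by
    show (op t.unop.a • (0 : W₁), ρ (0 : W₁) t.unop.m + op t.unop.b • (0 : W₂)) = 0
    simp
  smul_add t w v := by
    show (op t.unop.a • (w.1 + v.1), ρ (w.1 + v.1) t.unop.m + op t.unop.b • (w.2 + v.2)) = _
    ext
    · exact smul_add _ w.1 v.1
    · show _ = (ρ w.1 t.unop.m + op t.unop.b • w.2) + (ρ v.1 t.unop.m + op t.unop.b • v.2)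
      simp only [map_add, LinearMap.add_apply, smul_add]
      abel
  add_smul x y w := by
    show (op ((x + y).unop.a) • w.1, ρ w.1 ((x + y).unop.m) + op ((x + y).unop.b) • w.2) = _
    ext
    · show op (x.unop.a + y.unop.a) • w.1 = _
      rw [op_add, add_smul]
      rfl
    · show ρ w.1 (x.unop.m + y.unop.m) + op (x.unop.b + y.unop.b) • w.2 = _
      rw [map_add, op_add, add_smul]
      show _ = (ρ w.1 x.unop.m + op x.unop.b • w.2) + (ρ w.1 y.unop.m + op y.unop.b • w.2)
      abel
  zero_smul w := by
    show (op ((0 : (Triang A M B)ᵐᵒᵖ).unop.a) • w.1,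
      ρ w.1 ((0 : (Triang A M B)ᵐᵒᵖ).unop.m) + op ((0 : (Triang A M B)ᵐᵒᵖ).unop.b) • w.2) = 0
    show (op ((0 : Triang A M B).a) • w.1,
      ρ w.1 ((0 : Triang A M B).m) + op ((0 : Triang A M B).b) • w.2) = 0
    simp

/-- The right `T`-module attached to a triple `(W₁, W₂, φ̃)`, as a bundled module. -/
def rightTriple (ρ : W₁ →+ (M →ₗ[Bᵐᵒᵖ] W₂))
    (hρ : ∀ (a : A) (w : W₁) (m : M), ρ (op a • w) m = ρ w (a • m)) :
    Mdl (Triang A M B)ᵐᵒᵖ :=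
  @Mdl.mk (Triang A M B)ᵐᵒᵖ _ (W₁ × W₂) _ (rightTripleModule ρ hρ)

/-- The kernel of `φ̃ : W₁ → Hom_B(M, W₂)`, a right `A`-submodule of `W₁`. -/
def tildeKer (ρ : W₁ →+ (M →ₗ[Bᵐᵒᵖ] W₂))
    (hρ : ∀ (a : A) (w : W₁) (m : M), ρ (op a • w) m = ρ w (a • m)) :
    Submodule Aᵐᵒᵖ W₁ where
  carrier := {w | ρ w = 0}
  add_mem' := by
    intro w v hw hv
    show ρ (w + v) = 0
    rw [map_add, hw, hv, add_zero]
  zero_mem' := by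
    show ρ 0 = 0
    rw [map_zero]
  smul_mem' := by
    intro a w hw
    show ρ (a • w) = 0
    ext m
    have : a • w = op a.unop • w := by rw [op_unop]
    rw [this, hρ]
    rw [show (ρ w : M →ₗ[Bᵐᵒᵖ] W₂) = 0 from hw]
    rfl

end RightTriple

end

end DualityPairs

namespace DualityPairs

noncomputable section

open TensorProduct

variable (A B : Type u) [Ring A] [Ring B]
variable (M : Type u) [AddCommGroup M] [Module A M] [Module Bᵐᵒᵖ M] [SMulCommClass A Bᵐᵒᵖ M]

/-- The class `𝔅^{𝓒₁}_{𝓕₁}` of left `T`-modules: those isomorphic to a triple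
`(X₁, X₂, φ)` with `φ` injective, `Coker φ ∈ 𝓒₁` and `X₂ ∈ 𝓕₁`. -/
def BCl (𝓒₁ : Mdl.{u} A → Prop) (𝓕₁ : Mdl.{u} B → Prop) :
    Mdl.{u} (Triang A M B) → Prop := fun N =>
  ∃ (X₁ : Mdl.{u} A) (X₂ : Mdl.{u} B) (φ : MTensor A B M X₂ →ₗ[A] X₁),
    Nonempty (N ≃ₗ[Triang A M B] leftTriple φ) ∧
    Function.Injective φ ∧
    𝓒₁ (Mdl.of A ((X₁ : Type u) ⧸ LinearMap.range φ)) ∧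
    𝓕₁ X₂

/-- The class `𝔗_{𝓒₂,𝓕₂}` of right `T`-modules: those isomorphic to a triple
`(W₁, W₂, φ)` with `φ̃` surjective, `Ker φ̃ ∈ 𝓒₂` and `W₂ ∈ 𝓕₂`. -/
def TCl (𝓒₂ : Mdl.{u} Aᵐᵒᵖ → Prop) (𝓕₂ : Mdl.{u} Bᵐᵒᵖ → Prop) :
    Mdl.{u} (Triang A M B)ᵐᵒᵖ → Prop := fun N =>
  ∃ (W₁ : Mdl.{u} Aᵐᵒᵖ) (W₂ : Mdl.{u} Bᵐᵒᵖ) (ρ : W₁ →+ (M →ₗ[Bᵐᵒᵖ] W₂))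
    (hρ : ∀ (a : A) (w : W₁) (m : M), ρ (op a • w) m = ρ w (a • m)),
    Nonempty (N ≃ₗ[(Triang A M B)ᵐᵒᵖ] rightTriple ρ hρ) ∧
    Function.Surjective ρ ∧
    𝓒₂ (Mdl.of Aᵐᵒᵖ (tildeKer ρ hρ)) ∧
    𝓕₂ W₂

end

end DualityPairs

namespace DualityPairs

noncomputable section

open TensorProduct

variable (S : Type u) [Ring S]

/-- A submodule `K ≤ N` is pure if `0 → K → N → N/K → 0` stays exact after tensoring with any
(right) module, i.e. `G ⊗ K → G ⊗ N` is injective for every `G`. -/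
def IsPureSubmodule {N : Type u} [AddCommGroup N] [Module S N] (K : Submodule S N) : Prop :=
  ∀ G : Mdl.{u} Sᵐᵒᵖ, Function.Injective (CTensor.mapRight S (G : Type u) K.subtype)

/-- A class of left `S`-modules is definable if it is closed under direct products, directed
colimits and pure submodules. -/
def IsDefinableClass (𝓒 : Mdl.{u} S → Prop) : Prop :=
  (∀ (ι : Type u) (f : ι → Mdl.{u} S), (∀ i, 𝓒 (f i)) →
      𝓒 (Mdl.of S (∀ i, (f i : Type u)))) ∧
  (∀ (ι : Type u) [Preorder ι], IsDirected ι (· ≤ ·) → Nonempty ι →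
    ∀ (F : ι → Mdl.{u} S) (t : ∀ i j, i ≤ j → (F i : Type u) →ₗ[S] F j),
      (∀ (i : ι) (x : F i), t i i le_rfl x = x) →
      (∀ (i j k : ι) (hij : i ≤ j) (hjk : j ≤ k) (x : F i),
        t j k hjk (t i j hij x) = t i k (hij.trans hjk) x) →
    ∀ (C : Mdl.{u} S) (g : ∀ i, (F i : Type u) →ₗ[S] C),
      (∀ (i j : ι) (hij : i ≤ j) (x : F i), g j (t i j hij x) = g i x) →
      (∀ c : C, ∃ (i : ι) (x : F i), g i x = c) →
      (∀ (i : ι) (x : F i), g i x = 0 → ∃ (j : ι) (hij : i ≤ j), t i j hij x = 0) →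
      (∀ i, 𝓒 (F i)) → 𝓒 C) ∧
  (∀ (N : Mdl.{u} S) (K : Submodule S (N : Type u)), 𝓒 N → IsPureSubmodule S K →
      𝓒 (Mdl.of S K))

/-- The smallest definable class of left `S`-modules containing a given collection. -/
def definableClosure (Base : Mdl.{u} S → Prop) : Mdl.{u} S → Prop := fun N =>
  ∀ 𝓒 : Mdl.{u} S → Prop, IsDefinableClass S 𝓒 → (∀ X, Base X → 𝓒 X) → 𝓒 N

/-- `⟨F_S⟩`: the definable class of left `S`-modules generated by the flat modules. -/
def FDef : Mdl.{u} S → Prop :=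
  definableClosure S (fun F => IsFlatMod S (F : Type u))

/-- `⟨I_R⟩`: the definable class of right `R`-modules generated by the injective modules. -/
def IDef (R : Type u) [Ring R] : Mdl.{u} Rᵐᵒᵖ → Prop :=
  definableClosure Rᵐᵒᵖ (fun E => Module.Injective Rᵐᵒᵖ (E : Type u))

/-- A module `E` is FP-injective (absolutely pure) if `Ext¹(F, E) = 0` for every finitely
presented module `F`, i.e. every short exact sequence `0 → E → Y → F → 0` with `F` finitely
presented splits. -/
def IsFPInjective (E : Type u) [AddCommGroup E] [Module S E] : Prop :=
  ∀ (Y F : Mdl.{u} S), Module.FinitePresentation S (F : Type u) →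
    ∀ (i : E →ₗ[S] Y) (p : (Y : Type u) →ₗ[S] F), Function.Injective i → Function.Surjective p →
      LinearMap.range i = LinearMap.ker p →
      ∃ r : (Y : Type u) →ₗ[S] E, r.comp i = LinearMap.id

/-- `N` is Ding injective: `N` is a cycle of an exact complex of injective modules which stays
exact under `Hom(E, -)` for every FP-injective module `E`.  (Apply this to `Rᵐᵒᵖ` to speak
about right `R`-modules.) -/
def IsDingInjective (N : Type u) [AddCommGroup N] [Module S N] : Prop :=
  ∃ I : Cx S, (∀ n, Module.Injective S (I.X n)) ∧ I.Exact ∧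
    (∀ E : Mdl.{u} S, IsFPInjective S (E : Type u) → HomFromExact S (E : Type u) I) ∧
    Nonempty (N ≃ₗ[S] LinearMap.ker (I.d 0))

/-- `N` is projectively coresolved Gorenstein flat (PGF): a cycle of an exact complex of
projectives which stays exact after tensoring with any injective right module. -/
def IsPGF (R : Type u) [Ring R] (N : Type u) [AddCommGroup N] [Module R N] : Prop :=
  IsGorensteinProjective R (fun G => Module.Injective Rᵐᵒᵖ (G : Type u)) N

/-- `N` is Gorenstein flat: a cycle of an exact complex of flat modules which stays exact
after tensoring with any injective right module. -/
def IsGorensteinFlatAbs (R : Type u) [Ring R] (N : Type u) [AddCommGroup N] [Module R N] :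
    Prop :=
  IsGorensteinFlat R (fun G => Module.Injective Rᵐᵒᵖ (G : Type u)) N

/-- `P` is a projective resolution `⋯ → P₁ → P₀ → G → 0` of `G`, encoded as an exact complex
with `P.X n` projective for `n ≤ -1`, `P.X n = 0` for `n ≥ 1` and `P.X 0 ≅ G`. -/
def IsProjResolution (G : Type u) [AddCommGroup G] [Module S G] (P : Cx S) : Prop :=
  (∀ n : ℤ, n ≤ -1 → Module.Projective S (P.X n)) ∧
  (∀ n : ℤ, 1 ≤ n → Subsingleton (P.X n)) ∧
  P.Exact ∧
  Nonempty (G ≃ₗ[S] P.X 0)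

/-- `I` is an injective coresolution `0 → E → I⁰ → I¹ → ⋯` of `E`, encoded as a complex with
`I.X n` injective for `n ≥ 0`, `I.X n = 0` for `n ≤ -1`, exact at all spots `≥ 1`, and
`E ≅ ker (I⁰ → I¹)`. -/
def IsInjCoresolution (E : Type u) [AddCommGroup E] [Module S E] (I : Cx S) : Prop :=
  (∀ n : ℤ, 0 ≤ n → Module.Injective S (I.X n)) ∧
  (∀ n : ℤ, n ≤ -1 → Subsingleton (I.X n)) ∧
  (∀ n : ℤ, 0 ≤ n → ∀ x : I.X (n + 1), I.d (n + 1) x = 0 → ∃ y : I.X n, I.d n y = x) ∧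
  Nonempty (E ≃ₗ[S] LinearMap.ker (I.d 0))

end

end DualityPairs


open DualityPairs MulOpposite Function


variable (A B : Type u) [Ring A] [Ring B]
variable (M : Type u) [AddCommGroup M] [Module A M] [Module Bᵐᵒᵖ M] [SMulCommClass A Bᵐᵒᵖ M]

variable (W : Type u) [AddCommGroup W] [Module Aᵐᵒᵖ W]

/-!
The assignment `V ↦ (V, 0)` (zero `B`-slot, zero structure map) is an exact functor from right
`A`-modules to right `T`-modules, so it carries a finite `C₂`-coresolution of `W` to a finite
coresolution of `(W, 0)`. Each `(V, 0)` with `V ∈ C₂` lies in `𝔗_{C₂,F₂}`: its map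
`φ̃ : V → Hom_B(M, 0) = 0` is onto with kernel `V`, and `0 ∈ F₂` as a direct summand of `B⁺`.
-/

namespace DualityPairs

section DualityPairClosure

variable {R : Type u} [Ring R] {𝓛 : Mdl.{u} R → Prop} {𝓐 : Mdl.{u} Rᵐᵒᵖ → Prop}

theorem IsDualityPair.mem_of_linearEquiv (h : IsDualityPair R 𝓛 𝓐)
    {N N' : Mdl.{u} Rᵐᵒᵖ} (hN' : 𝓐 N') (e : N ≃ₗ[Rᵐᵒᵖ] N') : 𝓐 N :=
  h.summand N N' hN' ⟨e.toLinearMap, e.symm.toLinearMap, LinearMap.ext e.symm_apply_apply⟩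

theorem IsDualityPair.mem_of_subsingleton (h : IsDualityPair R 𝓛 𝓐) {N N' : Mdl.{u} Rᵐᵒᵖ}
    [Subsingleton N] (hN' : 𝓐 N') : 𝓐 N :=
  h.summand N N' hN' ⟨0, 0, LinearMap.ext fun _ => Subsingleton.elim _ _⟩

theorem IsSemiCompleteDualityPair.punit_mem (h : IsSemiCompleteDualityPair R 𝓛 𝓐) :
    𝓐 (Mdl.of Rᵐᵒᵖ PUnit.{u+1}) :=
  haveI : Subsingleton (Mdl.of Rᵐᵒᵖ PUnit.{u+1}) := inferInstanceAs (Subsingleton PUnit)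
  h.mem_of_subsingleton ((h.char_mem_iff (Mdl.of R R)).mp h.self_mem)

end DualityPairClosure

noncomputable section ZeroExtension

def zeroExt (V : Type u) [AddCommGroup V] [Module Aᵐᵒᵖ V] : Mdl.{u} (Triang A M B)ᵐᵒᵖ :=
  rightTriple (0 : V →+ (M →ₗ[Bᵐᵒᵖ] PUnit.{u+1})) fun _ _ _ => rfl

variable {A B M}
variable {V V' : Type u} [AddCommGroup V] [Module Aᵐᵒᵖ V] [AddCommGroup V'] [Module Aᵐᵒᵖ V']

def zeroExtMap (f : V →ₗ[Aᵐᵒᵖ] V') :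
    zeroExt A B M V →ₗ[(Triang A M B)ᵐᵒᵖ] zeroExt A B M V' where
  toFun p := (f p.1, PUnit.unit)
  map_add' p q := Prod.ext (f.map_add p.1 q.1) rfl
  map_smul' t p := Prod.ext (f.map_smul (op t.unop.a) p.1) rfl

variable (B M) in
def zeroExtKerEquiv (f : V →ₗ[Aᵐᵒᵖ] V') :
    zeroExt A B M (LinearMap.ker f) ≃ₗ[(Triang A M B)ᵐᵒᵖ]
      LinearMap.ker (zeroExtMap f : zeroExt A B M V →ₗ[_] zeroExt A B M V') where
  toFun p := ⟨(p.1, PUnit.unit), Prod.ext p.1.2 rfl⟩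
  invFun q := (⟨q.1.1, congrArg Prod.fst q.2⟩, PUnit.unit)
  map_add' _ _ := rfl
  map_smul' _ _ := rfl
  left_inv _ := rfl
  right_inv _ := rfl

def zeroExtEquiv (e : V ≃ₗ[Aᵐᵒᵖ] V') :
    zeroExt A B M V ≃ₗ[(Triang A M B)ᵐᵒᵖ] zeroExt A B M V' :=
  LinearEquiv.ofLinearMap (zeroExtMap e.toLinearMap) (zeroExtMap e.symm.toLinearMap)
    (LinearMap.ext fun p => Prod.ext (e.apply_symm_apply p.1) rfl)
    (LinearMap.ext fun p => Prod.ext (e.symm_apply_apply p.1) rfl)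

variable (B M) in
def Cx.zeroExt (C : Cx Aᵐᵒᵖ) : Cx (Triang A M B)ᵐᵒᵖ where
  X i := DualityPairs.zeroExt A B M (C.X i)
  d i := zeroExtMap (C.d i)
  dd i := LinearMap.ext fun p => Prod.ext (LinearMap.congr_fun (C.dd i) p.1) rfl

theorem zeroExt_mem_TCl {C₁ : Mdl.{u} A → Prop} {C₂ : Mdl.{u} Aᵐᵒᵖ → Prop}
    {F₂ : Mdl.{u} Bᵐᵒᵖ → Prop} (hC : IsDualityPair A C₁ C₂)
    (hF₂ : F₂ (Mdl.of Bᵐᵒᵖ PUnit.{u+1})) (hV : C₂ (Mdl.of Aᵐᵒᵖ V)) :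
    TCl A B M C₂ F₂ (zeroExt A B M V) := by
  refine ⟨Mdl.of Aᵐᵒᵖ V, Mdl.of Bᵐᵒᵖ PUnit.{u+1}, 0, fun _ _ _ => rfl,
    ⟨LinearEquiv.refl _ _⟩, fun _ => ⟨0, LinearMap.ext fun _ => rfl⟩,
    hC.mem_of_linearEquiv hV ?_, hF₂⟩
  exact (LinearEquiv.ofEq _ ⊤ (eq_top_iff.mpr fun _ _ => rfl)).trans Submodule.topEquiv

theorem FiniteXInjDim.zeroExt {𝓧 : Mdl.{u} Aᵐᵒᵖ → Prop}
    {𝓨 : Mdl.{u} (Triang A M B)ᵐᵒᵖ → Prop}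
    (h𝓧𝓨 : ∀ (V : Type u) [AddCommGroup V] [Module Aᵐᵒᵖ V],
      𝓧 (Mdl.of Aᵐᵒᵖ V) → 𝓨 (zeroExt A B M V))
    (hV : FiniteXInjDim Aᵐᵒᵖ 𝓧 V) :
    FiniteXInjDim (Triang A M B)ᵐᵒᵖ 𝓨 (zeroExt A B M V) := by
  obtain ⟨n, C, hzero, hmem, hexact, ⟨e⟩⟩ := hV
  refine ⟨n, Cx.zeroExt B M C, fun i hi => ?_, fun i h0 hn => h𝓧𝓨 _ (hmem i h0 hn),
    fun i h0 x hx => ?_, ⟨(zeroExtEquiv e).trans (zeroExtKerEquiv B M (C.d 0))⟩⟩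
  · have := hzero i hi
    exact inferInstanceAs (Subsingleton (C.X i × PUnit))
  · obtain ⟨y, hy⟩ := hexact i h0 x.1 (congrArg Prod.fst hx)
    exact ⟨(y, PUnit.unit), Prod.ext hy rfl⟩

end ZeroExtension

end DualityPairs

theorem statement16
    (C₁ : Mdl.{u} A → Prop) (C₂ : Mdl.{u} Aᵐᵒᵖ → Prop)
    (F₁ : Mdl.{u} B → Prop) (F₂ : Mdl.{u} Bᵐᵒᵖ → Prop)
    (hDA : IsSemiCompleteDualityPair A C₁ C₂)
    (hDB : IsSemiCompleteDualityPair B F₁ F₂)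
    (hW : FiniteXInjDim Aᵐᵒᵖ C₂ W) :
    FiniteXInjDim (Triang A M B)ᵐᵒᵖ (TCl A B M C₂ F₂)
      (rightTriple (0 : W →+ (M →ₗ[Bᵐᵒᵖ] PUnit.{u+1}))
        (fun (a : A) (w : W) (m : M) =>
          (rfl : (0 : W →+ (M →ₗ[Bᵐᵒᵖ] PUnit.{u+1})) (op a • w) m
            = (0 : W →+ (M →ₗ[Bᵐᵒᵖ] PUnit.{u+1})) w (a • m)))) :=
  hW.zeroExt fun _ _ _ hV => zeroExt_mem_TCl hDA.toIsDualityPair hDB.punit_mem hV
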